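/- Let S(t) be a continuous semigroup on a metric space H possessing a global attractor 𝒜 (a compact, strictly invariant set attracting all bounded sets). Then any finite system of continuous functionals F₁,…,Fₙ : H → ℝ that is separating on the attractor (i.e., whenever two complete bounded trajectories u₁, u₂ : ℝ → 𝒜 satisfy Fᵢ(u₁(t)) = Fᵢ(u₂(t)) for all t ∈ ℝ and all i, then u₁ ≡ u₂) is asymptotically determining: for any two semitrajectories u₁(t) = S(t)u₁⁰, u₂(t) = S(t)u₂⁰, if Fᵢ(u₁(t)) − Fᵢ(u₂(t)) → 0 as t → ∞ for all i, then d(u₁(t), u₂(t)) → 0 as t → ∞. -/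
import Mathlib

open Filter Metric Topology

theorem separating_implies_determining
    {H : Type*} [MetricSpace H] (S : ℝ → H → H)
    (hS0 : S 0 = id)
    (hSsemi : ∀ s t : ℝ, 0 ≤ s → 0 ≤ t → ∀ x, S t (S s x) = S (s + t) x)
    (hScont : ∀ t : ℝ, 0 ≤ t → Continuous (S t))
    (A : Set H) (hAcomp : IsCompact A)
    (hAinv : ∀ t : ℝ, 0 ≤ t → S t '' A = A)
    (hAattr : ∀ B : Set H, Bornology.IsBounded B → ∀ ε > 0, ∃ T : ℝ,
      ∀ t ≥ T, S t '' B ⊆ Metric.thickening ε A)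
    (n : ℕ) (F : Fin n → H → ℝ) (hFcont : ∀ i, Continuous (F i))
    (hsep : ∀ u₁ u₂ : ℝ → H,
      (∀ t, u₁ t ∈ A) → (∀ t, u₂ t ∈ A) →
      (∀ s : ℝ, ∀ t : ℝ, 0 ≤ t → S t (u₁ s) = u₁ (s + t)) →
      (∀ s : ℝ, ∀ t : ℝ, 0 ≤ t → S t (u₂ s) = u₂ (s + t)) →
      (∀ t : ℝ, ∀ i, F i (u₁ t) = F i (u₂ t)) → u₁ = u₂) :
    ∀ u10 u20 : H,
      (∀ i, Filter.Tendsto (fun t => F i (S t u10) - F i (S t u20))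
        Filter.atTop (nhds 0)) →
      Filter.Tendsto (fun t => dist (S t u10) (S t u20)) Filter.atTop (nhds 0) := by
  intro u10 u20 hF
  -- A is nonempty
  have hAne : A.Nonempty := by
    obtain ⟨T, hT⟩ := hAattr {u10} Bornology.isBounded_singleton 1 one_pos
    have : S T u10 ∈ Metric.thickening 1 A := hT T le_rfl ⟨u10, rfl, rfl⟩
    rcases Metric.mem_thickening_iff.1 this with ⟨y, hy, -⟩
    exact ⟨y, hy⟩
  -- pointwise attraction in terms of infDist
  have hpt : ∀ x0 : H, Tendsto (fun τ => Metric.infDist (S τ x0) A) atTop (𝓝 0) := by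
    intro x0
    rw [Metric.tendsto_atTop]
    intro ε hε
    obtain ⟨T, hT⟩ := hAattr {x0} Bornology.isBounded_singleton ε hε
    refine ⟨T, fun τ hτ => ?_⟩
    have : S τ x0 ∈ Metric.thickening ε A := hT τ hτ ⟨x0, rfl, rfl⟩
    rw [Metric.mem_thickening_iff_infDist_lt hAne] at this
    rwa [Real.dist_eq, sub_zero, abs_of_nonneg Metric.infDist_nonneg]
  -- nearest point projection onto A
  have hproj : ∀ x : H, ∃ y : H, y ∈ A ∧ Metric.infDist x A = dist x y := fun x =>
    let ⟨y, hy, h⟩ := hAcomp.exists_infDist_eq_dist hAne x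
    ⟨y, hy, h⟩
  choose p hpA hpd using hproj
  -- suppose not
  by_contra hcon
  rw [Metric.tendsto_atTop] at hcon
  push_neg at hcon
  obtain ⟨ε, hε, hfr⟩ := hcon
  choose t ht htd using fun k : ℕ => hfr k
  have htd' : ∀ k, ε ≤ dist (S (t k) u10) (S (t k) u20) := by
    intro k
    have := htd k
    rwa [Real.dist_eq, sub_zero, abs_of_nonneg dist_nonneg] at this
  have httop : Tendsto t atTop atTop :=
    tendsto_atTop_mono ht tendsto_natCast_atTop_atTop
  -- ultrafilter extending atTop
  let 𝒰 : Ultrafilter ℕ := Ultrafilter.of atTop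
  have h𝒰 : (𝒰 : Filter ℕ) ≤ atTop := Ultrafilter.of_le _
  have hts : ∀ s : ℝ, Tendsto (fun k => t k + s) atTop atTop := fun s =>
    tendsto_atTop_add_const_right _ s httop
  -- limits along the ultrafilter
  have hexists : ∀ x0 : H, ∀ s : ℝ,
      ∃ y ∈ A, Tendsto (fun k => S (t k + s) x0) (𝒰 : Filter ℕ) (𝓝 y) := by
    intro x0 s
    have hinf : Tendsto (fun k => Metric.infDist (S (t k + s) x0) A) (𝒰 : Filter ℕ) (𝓝 0) :=
      ((hpt x0).comp (hts s)).mono_left h𝒰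
    obtain ⟨y, hyA, hy⟩ := hAcomp.ultrafilter_le_nhds (𝒰.map (fun k => p (S (t k + s) x0)))
      (by
        simp only [Ultrafilter.coe_map, Filter.le_principal_iff, Filter.mem_map]
        exact Filter.Eventually.of_forall fun k => hpA _)
    have hy' : Tendsto (fun k => p (S (t k + s) x0)) (𝒰 : Filter ℕ) (𝓝 y) := hy
    refine ⟨y, hyA, hy'.congr_dist ?_⟩
    refine hinf.congr fun k => ?_
    rw [dist_comm, ← hpd]
  choose u₁ hu₁A hu₁ using hexists u10
  choose u₂ hu₂A hu₂ using hexists u20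
  haveI : (𝒰 : Filter ℕ).NeBot := 𝒰.neBot
  -- semigroup property of the limit trajectories
  have hsg : ∀ (x0 : H) (u : ℝ → H),
      (∀ s, Tendsto (fun k => S (t k + s) x0) (𝒰 : Filter ℕ) (𝓝 (u s))) →
      ∀ s τ : ℝ, 0 ≤ τ → S τ (u s) = u (s + τ) := by
    intro x0 u hu s τ hτ
    have h1 : Tendsto (fun k => S τ (S (t k + s) x0)) (𝒰 : Filter ℕ) (𝓝 (S τ (u s))) :=
      ((hScont τ hτ).continuousAt.tendsto).comp (hu s)
    have h2 : Tendsto (fun k => S (t k + (s + τ)) x0) (𝒰 : Filter ℕ) (𝓝 (u (s + τ))) :=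
      hu (s + τ)
    have heq : ∀ᶠ k in (𝒰 : Filter ℕ),
        S τ (S (t k + s) x0) = S (t k + (s + τ)) x0 := by
      filter_upwards [((hts s).eventually_ge_atTop 0).filter_mono h𝒰] with k hk
      rw [hSsemi (t k + s) τ hk hτ]
      ring_nf
    exact tendsto_nhds_unique (h1.congr' heq) h2
  have hsg1 := hsg u10 u₁ hu₁
  have hsg2 := hsg u20 u₂ hu₂
  -- the functionals agree on the limit trajectories
  have hFeq : ∀ s : ℝ, ∀ i, F i (u₁ s) = F i (u₂ s) := by
    intro s i
    have h1 : Tendsto (fun k => F i (S (t k + s) u10) - F i (S (t k + s) u20))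
        (𝒰 : Filter ℕ) (𝓝 (F i (u₁ s) - F i (u₂ s))) :=
      (((hFcont i).continuousAt.tendsto).comp (hu₁ s)).sub
        (((hFcont i).continuousAt.tendsto).comp (hu₂ s))
    have h2 : Tendsto (fun k => F i (S (t k + s) u10) - F i (S (t k + s) u20))
        (𝒰 : Filter ℕ) (𝓝 0) := ((hF i).comp (hts s)).mono_left h𝒰
    have := tendsto_nhds_unique h1 h2
    linarith [sub_eq_zero.1 this]
  -- separation gives equality
  have huu : u₁ = u₂ := hsep u₁ u₂ hu₁A hu₂A hsg1 hsg2 hFeq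
  -- contradiction
  have hdist : Tendsto (fun k => dist (S (t k + 0) u10) (S (t k + 0) u20))
      (𝒰 : Filter ℕ) (𝓝 (dist (u₁ 0) (u₂ 0))) := (hu₁ 0).dist (hu₂ 0)
  have hge : ε ≤ dist (u₁ 0) (u₂ 0) := by
    refine ge_of_tendsto hdist ?_
    filter_upwards with k
    simpa using htd' k
  rw [huu, dist_self] at hge
  linarith
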